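/- arXiv:2109.05946 — 4 statements merged into one kernel-verified Lean document; each statement's English description precedes it below -/
import Mathlib

section
/- Let M0 be a maximal matching of G and M* a maximum matching. Let W_M be the set of edges of M* having exactly one endpoint in V(M0). Then |W_M| ≥ 2(|M*| − |M0|). -/
/-!
Every edge of `G` meets `V(M0)`, by maximality of `M0`, so an edge of `M*` that is not a wing has
both endpoints in `V(M0)` and a wing has one. The edges of `M*` are disjoint, hence
`2 (|M*| - |W_M|) + |W_M| ≤ |V(M0)| ≤ 2 |M0|`.
-/

variable {V : Type*} [Fintype V] [DecidableEq V]

/-- A matching of `G`: a finite set of edges of `G` that are pairwise vertex-disjoint. -/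
def IsMatching (G : SimpleGraph V) (M : Finset (Sym2 V)) : Prop :=
  (∀ e ∈ M, e ∈ G.edgeSet) ∧
    ∀ e ∈ M, ∀ f ∈ M, e ≠ f → ∀ v : V, v ∈ e → v ∉ f

/-- The set of vertices covered by a set of edges. -/
def mverts (M : Finset (Sym2 V)) : Set V := {v | ∃ e ∈ M, v ∈ e}

open Finset

section

variable {α : Type*} [DecidableEq α] {G : SimpleGraph α} {M : Finset (Sym2 α)}

def IsWing (M : Finset (Sym2 α)) (e : Sym2 α) : Prop :=
  ∃ u v : α, e = s(u, v) ∧ u ∈ mverts M ∧ v ∉ mverts M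

def coveredFinset (M : Finset (Sym2 α)) : Finset α := M.biUnion Sym2.toFinset

lemma mem_coveredFinset {v : α} : v ∈ coveredFinset M ↔ v ∈ mverts M := by
  simp [coveredFinset, mverts]

lemma card_coveredFinset_le (M : Finset (Sym2 α)) : #(coveredFinset M) ≤ 2 * #M :=
  calc #(coveredFinset M) ≤ ∑ e ∈ M, #e.toFinset := card_biUnion_le
    _ ≤ ∑ _e ∈ M, 2 := sum_le_sum fun e _ => by rw [Sym2.card_toFinset]; split_ifs <;> omega
    _ = 2 * #M := by rw [sum_const, smul_eq_mul, mul_comm]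

lemma IsMatching.insert_of_forall_notMem_mverts (hM : IsMatching G M) {e : Sym2 α}
    (he : e ∈ G.edgeSet) (hfree : ∀ v ∈ e, v ∉ mverts M) : IsMatching G (insert e M) := by
  refine ⟨fun f hf => ?_, fun f hf g hg hfg v hvf hvg => ?_⟩
  · rcases mem_insert.1 hf with rfl | hf
    exacts [he, hM.1 f hf]
  · rcases mem_insert.1 hf with rfl | hfM <;> rcases mem_insert.1 hg with rfl | hgM
    · exact hfg rfl
    · exact hfree v hvf ⟨g, hgM, hvg⟩
    · exact hfree v hvg ⟨f, hfM, hvf⟩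
    · exact hM.2 f hfM g hgM hfg v hvf hvg

lemma IsMatching.exists_mem_mverts_of_maximal (hM : IsMatching G M)
    (hmax : ∀ e ∈ G.edgeSet, e ∉ M → ¬ IsMatching G (insert e M)) {e : Sym2 α}
    (he : e ∈ G.edgeSet) : ∃ v ∈ e, v ∈ mverts M := by
  by_contra! hfree
  have heM : e ∉ M := fun heM => hfree _ e.out_fst_mem ⟨e, heM, e.out_fst_mem⟩
  exact hmax e he heM (hM.insert_of_forall_notMem_mverts he hfree)

lemma IsMatching.mem_mverts_of_not_isWing (hM : IsMatching G M)
    (hmax : ∀ e ∈ G.edgeSet, e ∉ M → ¬ IsMatching G (insert e M)) {e : Sym2 α}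
    (he : e ∈ G.edgeSet) (hnw : ¬ IsWing M e) : ∀ v ∈ e, v ∈ mverts M := by
  obtain ⟨u, hue, hu⟩ := hM.exists_mem_mverts_of_maximal hmax he
  intro v hve
  by_contra hv
  have huv : u ≠ v := by rintro rfl; exact hv hu
  exact hnw ⟨u, v, ((Sym2.mem_and_mem_iff huv).1 ⟨hue, hve⟩), hu, hv⟩

lemma IsMatching.sum_card_inter_le (hM : IsMatching G M) (T : Finset α) :
    ∑ e ∈ M, #(e.toFinset ∩ T) ≤ #T := by
  rw [← card_biUnion]
  · exact card_le_card (biUnion_subset.2 fun _ _ => inter_subset_right)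
  · intro e he f hf hef
    refine disjoint_left.2 fun v hve hvf => ?_
    exact hM.2 e he f hf hef v (Sym2.mem_toFinset.1 (mem_inter.1 hve).1)
      (Sym2.mem_toFinset.1 (mem_inter.1 hvf).1)

lemma IsMatching.two_mul_card_sdiff_add_card_le (hM : IsMatching G M) {W : Finset (Sym2 α)}
    (T : Finset α) (hW : W ⊆ M) (hmeet : ∀ e ∈ W, ∃ v ∈ e, v ∈ T)
    (hinside : ∀ e ∈ M \ W, ∀ v ∈ e, v ∈ T) :
    2 * #(M \ W) + #W ≤ #T := by
  have hinside' : ∀ e ∈ M \ W, 2 ≤ #(e.toFinset ∩ T) := fun e he => by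
    have hT : e.toFinset ∩ T = e.toFinset :=
      inter_eq_left.2 fun v hv => hinside e he v (Sym2.mem_toFinset.1 hv)
    rw [hT, Sym2.card_toFinset_of_not_isDiag e
      (G.not_isDiag_of_mem_edgeSet (hM.1 e (mem_sdiff.1 he).1))]
  have hmeet' : ∀ e ∈ W, 1 ≤ #(e.toFinset ∩ T) := fun e he => by
    obtain ⟨v, hve, hvT⟩ := hmeet e he
    exact card_pos.2 ⟨v, mem_inter.2 ⟨Sym2.mem_toFinset.2 hve, hvT⟩⟩
  calc 2 * #(M \ W) + #W = ∑ _e ∈ M \ W, 2 + ∑ _e ∈ W, 1 := by simp [mul_comm]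
    _ ≤ ∑ e ∈ M \ W, #(e.toFinset ∩ T) + ∑ e ∈ W, #(e.toFinset ∩ T) :=
      add_le_add (sum_le_sum hinside') (sum_le_sum hmeet')
    _ = ∑ e ∈ M, #(e.toFinset ∩ T) := sum_sdiff hW
    _ ≤ #T := hM.sum_card_inter_le T

end

theorem wings_of_optimum_lower_bound_general (G : SimpleGraph V) (M0 Mstar WM : Finset (Sym2 V))
    (hM0 : IsMatching G M0)
    (hM0maximal : ∀ e ∈ G.edgeSet, e ∉ M0 → ¬ IsMatching G (insert e M0))
    (hMstar : IsMatching G Mstar)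
    (hWM : ∀ e, e ∈ WM ↔ e ∈ Mstar ∧
      ∃ u v : V, e = s(u, v) ∧ u ∈ mverts M0 ∧ v ∉ mverts M0) :
    2 * ((Mstar.card : ℤ) - M0.card) ≤ WM.card := by
  have hsub : WM ⊆ Mstar := fun e he => ((hWM e).1 he).1
  have hcount := hMstar.two_mul_card_sdiff_add_card_le (coveredFinset M0) hsub
    (fun e he => by
      obtain ⟨-, u, v, rfl, hu, -⟩ := (hWM _).1 he
      exact ⟨u, Sym2.mem_mk_left u v, mem_coveredFinset.2 hu⟩)
    (fun e he v hv => by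
      obtain ⟨heM, heW⟩ := mem_sdiff.1 he
      exact mem_coveredFinset.2 <| hM0.mem_mverts_of_not_isWing hM0maximal (hMstar.1 e heM)
        (fun hw => heW ((hWM e).2 ⟨heM, hw⟩)) v hv)
  have hcover := card_coveredFinset_le M0
  have hsdiff := card_sdiff_of_subset hsub
  have hle := card_le_card hsub
  omega

/-- If `M0` is a maximal matching, `M*` a maximum matching, and `W_M` the set of edges of
`M*` with exactly one endpoint in `V(M0)`, then `|W_M| ≥ 2(|M*| − |M0|)`. -/
theorem wings_of_optimum_lower_bound (G : SimpleGraph V) (M0 Mstar WM : Finset (Sym2 V))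
    (hM0 : IsMatching G M0)
    (hM0maximal : ∀ e ∈ G.edgeSet, e ∉ M0 → ¬ IsMatching G (insert e M0))
    (hMstar : IsMatching G Mstar)
    (hMstarMax : ∀ N : Finset (Sym2 V), IsMatching G N → N.card ≤ Mstar.card)
    (hWM : ∀ e, e ∈ WM ↔ e ∈ Mstar ∧
      ∃ u v : V, e = s(u, v) ∧ u ∈ mverts M0 ∧ v ∉ mverts M0) :
    2 * ((Mstar.card : ℤ) - M0.card) ≤ WM.card :=
  wings_of_optimum_lower_bound_general G M0 Mstar WM hM0 hM0maximal hMstar hWM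
end

section
/- Let (V,P) be a graph whose components are isolated vertices, isolated edges, paths of length 2, or triangles, with s isolated edges, d paths of length 2, and t triangles. Let M* be any matching of the ambient graph G=(V,E). Define the charge of an edge (u,v) ∈ M* to a component C of (V,P): C is charged 1 for each endpoint of (u,v) it contains if |C| = 3, charged 1/2 per endpoint if C is an isolated edge, and 0 if C is an isolated vertex. Then the total charge over all edges of M* is at most s + 3d + 3t. -/
variable {V : Type*} [Fintype V] [DecidableEq V]

/-- A connected component of `H` is a triangle: it has 3 vertices, all pairwise adjacent. -/
def IsTriangleComp (H : SimpleGraph V) (c : H.ConnectedComponent) : Prop :=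
  c.supp.ncard = 3 ∧ ∀ x ∈ c.supp, ∀ y ∈ c.supp, x ≠ y → H.Adj x y

/-- A connected component of `H` is a path of length 2: it has 3 vertices and is not
a triangle. -/
def IsPath2Comp (H : SimpleGraph V) (c : H.ConnectedComponent) : Prop :=
  c.supp.ncard = 3 ∧ ¬ IsTriangleComp H c

/-- The charge received, per endpoint of a matching edge, by the component of that
endpoint in `(V,P)`: `1` if the component has 3 vertices, `1/2` if it is an isolated
edge (2 vertices), and `0` if it is an isolated vertex. -/
noncomputable def vertexCharge (H : SimpleGraph V) (x : V) : ℚ :=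
  if (H.connectedComponentMk x).supp.ncard = 3 then 1
  else if (H.connectedComponentMk x).supp.ncard = 2 then 1 / 2
  else 0

/-- The total charge of an edge `(u,v)`: the sum of the charges assigned to the
components of its two endpoints. -/
noncomputable def edgeCharge (H : SimpleGraph V) : Sym2 V → ℚ :=
  Sym2.lift ⟨fun u v => vertexCharge H u + vertexCharge H v, fun u v => by ring⟩


/-! Matching edges are vertex-disjoint and are not loops, so the total charge is at most the sum
of `vertexCharge` over all of `V`. Grouping that sum by component, a component with three vertices
receives `3 · 1`, an isolated edge `2 · 1/2`, and every other component nothing; and the components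
with three vertices are exactly the paths of length 2 and the triangles. -/

theorem Set.ncard_setOf_eq_sum_boole {α R : Type*} [Fintype α] [AddCommMonoidWithOne R]
    (p : α → Prop) [DecidablePred p] :
    ({a | p a}.ncard : R) = ∑ a, if p a then 1 else 0 := by
  rw [Finset.sum_boole, Set.ncard_eq_toFinset_card', Set.toFinset_ofPred]

theorem SimpleGraph.sum_comp_connectedComponentMk {V M : Type*} [Fintype V] [AddCommMonoid M]
    (H : SimpleGraph V) [Fintype H.ConnectedComponent] (f : H.ConnectedComponent → M) :
    ∑ x, f (H.connectedComponentMk x) = ∑ c, c.supp.ncard • f c := by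
  classical
  rw [← Finset.sum_fiberwise Finset.univ H.connectedComponentMk]
  refine Finset.sum_congr rfl fun c _ => ?_
  rw [Finset.sum_congr rfl fun x hx => congrArg f (Finset.mem_filter.mp hx).2, Finset.sum_const,
    Set.ncard_eq_toFinset_card']
  congr 2
  ext x
  simp [SimpleGraph.ConnectedComponent.mem_supp_iff]

theorem IsMatching.sum_sum_toFinset_le {R : Type*} [AddCommMonoid R] [PartialOrder R]
    [IsOrderedAddMonoid R] {G : SimpleGraph V} {M : Finset (Sym2 V)} (hM : IsMatching G M)
    {f : V → R} (hf : ∀ x, 0 ≤ f x) :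
    ∑ e ∈ M, ∑ x ∈ e.toFinset, f x ≤ ∑ x, f x := by
  have hdisj : (M : Set (Sym2 V)).PairwiseDisjoint Sym2.toFinset :=
    fun e he e' he' hne => Finset.disjoint_left.mpr fun x hx hx' =>
      hM.2 e he e' he' hne x (Sym2.mem_toFinset.mp hx) (Sym2.mem_toFinset.mp hx')
  rw [← Finset.sum_biUnion hdisj]
  exact Finset.sum_le_univ_sum_of_nonneg hf

theorem vertexCharge_nonneg {V : Type*} (H : SimpleGraph V) (x : V) : 0 ≤ vertexCharge H x := by
  unfold vertexCharge
  split_ifs <;> norm_num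

theorem edgeCharge_eq_sum_toFinset {V : Type*} [DecidableEq V] (H : SimpleGraph V) {e : Sym2 V}
    (he : ¬ e.IsDiag) : edgeCharge H e = ∑ x ∈ e.toFinset, vertexCharge H x := by
  induction e using Sym2.ind with
  | _ u v =>
    rw [Sym2.toFinset_mk_eq, Finset.sum_pair (Sym2.mk_isDiag_iff.not.mp he)]
    rfl

theorem IsMatching.sum_edgeCharge_le {G : SimpleGraph V} {M : Finset (Sym2 V)}
    (hM : IsMatching G M) (H : SimpleGraph V) :
    ∑ e ∈ M, edgeCharge H e ≤ ∑ x, vertexCharge H x := by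
  rw [Finset.sum_congr rfl fun e he =>
    edgeCharge_eq_sum_toFinset H (G.not_isDiag_of_mem_edgeSet (hM.1 e he))]
  exact hM.sum_sum_toFinset_le (vertexCharge_nonneg H)

theorem sum_vertexCharge {V : Type*} [Fintype V] (H : SimpleGraph V) :
    ∑ x, vertexCharge H x = 3 * {c : H.ConnectedComponent | c.supp.ncard = 3}.ncard
      + {c : H.ConnectedComponent | c.supp.ncard = 2}.ncard := by
  classical
  have hsplit : ∀ n : ℕ, n • (if n = 3 then (1 : ℚ) else if n = 2 then 1 / 2 else 0)
      = 3 * (if n = 3 then 1 else 0) + (if n = 2 then 1 else 0) := by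
    intro n
    split_ifs <;> simp_all
  rw [Set.ncard_setOf_eq_sum_boole, Set.ncard_setOf_eq_sum_boole, Finset.mul_sum,
    ← Finset.sum_add_distrib]
  exact (H.sum_comp_connectedComponentMk _).trans
    (Finset.sum_congr rfl fun c _ => hsplit c.supp.ncard)

theorem ncard_components_of_size_three {V : Type*} [Finite V] (H : SimpleGraph V) :
    {c : H.ConnectedComponent | c.supp.ncard = 3}.ncard
      = {c | IsPath2Comp H c}.ncard + {c | IsTriangleComp H c}.ncard := by
  rw [← Set.ncard_union_eq _ (Set.toFinite _) (Set.toFinite _)]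
  · congr 1
    ext c
    simp only [IsPath2Comp, Set.mem_ofPred_eq, Set.mem_union]
    constructor
    · intro h3
      by_cases htri : IsTriangleComp H c
      exacts [Or.inr htri, Or.inl ⟨h3, htri⟩]
    · rintro (h | h) <;> exact h.1
  · exact Set.disjoint_left.mpr fun c hpath htri => hpath.2 htri

theorem total_charge_upper_bound_general (G H : SimpleGraph V)
    (Mstar : Finset (Sym2 V)) (hMstar : IsMatching G Mstar)
    (s d t : ℕ)
    (hs : s = {c : H.ConnectedComponent | c.supp.ncard = 2}.ncard)
    (hd : d = {c : H.ConnectedComponent | IsPath2Comp H c}.ncard)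
    (ht : t = {c : H.ConnectedComponent | IsTriangleComp H c}.ncard) :
    ∑ e ∈ Mstar, edgeCharge H e ≤ s + 3 * d + 3 * t := by
  calc ∑ e ∈ Mstar, edgeCharge H e
      ≤ ∑ x, vertexCharge H x := hMstar.sum_edgeCharge_le H
    _ = s + 3 * d + 3 * t := by
      rw [sum_vertexCharge, ncard_components_of_size_three, hs, hd, ht]
      push_cast
      ring

/-- The total charge of the edges of a matching `M*` to the components of `(V,P)` is at
most `s + 3d + 3t`, where `s`, `d`, `t` count the isolated-edge, length-2-path, and
triangle components of `(V,P)`. -/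
theorem total_charge_upper_bound (G H : SimpleGraph V) (hle : H ≤ G)
    (hcomp : ∀ c : H.ConnectedComponent, c.supp.ncard ≤ 3)
    (Mstar : Finset (Sym2 V)) (hMstar : IsMatching G Mstar)
    (s d t : ℕ)
    (hs : s = {c : H.ConnectedComponent | c.supp.ncard = 2}.ncard)
    (hd : d = {c : H.ConnectedComponent | IsPath2Comp H c}.ncard)
    (ht : t = {c : H.ConnectedComponent | IsTriangleComp H c}.ncard) :
    ∑ e ∈ Mstar, edgeCharge H e ≤ s + 3 * d + 3 * t :=
  total_charge_upper_bound_general G H Mstar hMstar s d t hs hd ht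
end

section
/- With P as above and M* a maximum matching of G, let D-to-N count edges of M* joining a connection vertex of a component of (V,P) to an isolated vertex, D-to-D count edges of M* joining connection vertices of two distinct components, S-S count edges of M* whose two endpoints lie in isolated-edge components, D-S count edges of M* joining a vertex of an isolated edge to a connection vertex of another component, and D-mid count edges of M* incident to the middle vertex of a length-2-path component or contained inside a triangle component. Then D-to-N + D-to-D + S-S + D-S + D-mid ≥ |M*|. -/
/-!
Everything rests on the maximality of `P`. Adding an edge `uv` to `P` merges at most the two
components of `u` and `v`, so if `uv ∉ P` these components are distinct and have at least four
vertices together. Hence an edge of `M*` either lies in `P` (inside an isolated edge or a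
triangle, or at the middle of a path, since the two ends of a path are not adjacent), or it joins
two isolated edges, or one of its ends lies in a three-vertex component; each case is one of the
five categories, and a union bound gives the count.
-/

variable {V : Type*} [Fintype V] [DecidableEq V]

/-- `x` is an isolated vertex of `H`. -/
def IsIsoVert (H : SimpleGraph V) (x : V) : Prop :=
  (H.connectedComponentMk x).supp.ncard = 1

/-- `x` belongs to an isolated-edge component of `H`. -/
def InIsoEdge (H : SimpleGraph V) (x : V) : Prop :=
  (H.connectedComponentMk x).supp.ncard = 2

/-- `x` is a connection vertex: it lies in a 3-vertex component and is either an
endpoint of a length-2 path (degree 1) or a vertex of a triangle component. -/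
def IsConnVert (H : SimpleGraph V) (x : V) : Prop :=
  (H.connectedComponentMk x).supp.ncard = 3 ∧
    ((∀ y z : V, H.Adj x y → H.Adj x z → y = z) ∨
      IsTriangleComp H (H.connectedComponentMk x))

/-- `x` is the middle vertex of a length-2-path component of `H`. -/
def IsMidVert (H : SimpleGraph V) (x : V) : Prop :=
  (H.connectedComponentMk x).supp.ncard = 3 ∧ ¬ IsConnVert H x

/-- Category D-to-N: joins a connection vertex to an isolated vertex. -/
def CatDN (H : SimpleGraph V) (e : Sym2 V) : Prop :=
  ∃ u v : V, e = s(u, v) ∧ IsConnVert H u ∧ IsIsoVert H v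

/-- Category D-to-D: joins connection vertices of two distinct components. -/
def CatDD (H : SimpleGraph V) (e : Sym2 V) : Prop :=
  ∃ u v : V, e = s(u, v) ∧ IsConnVert H u ∧ IsConnVert H v ∧
    H.connectedComponentMk u ≠ H.connectedComponentMk v

/-- Category S-S: both endpoints lie in isolated-edge components. -/
def CatSS (H : SimpleGraph V) (e : Sym2 V) : Prop :=
  ∃ u v : V, e = s(u, v) ∧ InIsoEdge H u ∧ InIsoEdge H v

/-- Category D-S: joins a vertex of an isolated edge to a connection vertex. -/
def CatDS (H : SimpleGraph V) (e : Sym2 V) : Prop :=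
  ∃ u v : V, e = s(u, v) ∧ InIsoEdge H u ∧ IsConnVert H v

/-- Category D-mid: incident to the middle vertex of a length-2-path component, or
contained inside a triangle component. -/
def CatDM (H : SimpleGraph V) (e : Sym2 V) : Prop :=
  (∃ u v : V, e = s(u, v) ∧ IsMidVert H u) ∨
    (∃ u v : V, e = s(u, v) ∧ H.connectedComponentMk u = H.connectedComponentMk v ∧
      IsTriangleComp H (H.connectedComponentMk u))

open SimpleGraph

theorem Set.ncard_le_sum_ncard_sep_of_forall_or {α : Type*} {s : Set α} (hs : s.Finite)
    {p₁ p₂ p₃ p₄ p₅ : α → Prop} (h : ∀ e ∈ s, p₁ e ∨ p₂ e ∨ p₃ e ∨ p₄ e ∨ p₅ e) :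
    s.ncard ≤ {e ∈ s | p₁ e}.ncard + {e ∈ s | p₂ e}.ncard + {e ∈ s | p₃ e}.ncard +
      {e ∈ s | p₄ e}.ncard + {e ∈ s | p₅ e}.ncard := by
  set A := {e ∈ s | p₁ e}
  set B := {e ∈ s | p₂ e}
  set C := {e ∈ s | p₃ e}
  set D := {e ∈ s | p₄ e}
  set E := {e ∈ s | p₅ e}
  have hcover : s ⊆ A ∪ B ∪ C ∪ D ∪ E := by
    intro e he
    rcases h e he with h | h | h | h | h
    · exact .inl <| .inl <| .inl <| .inl ⟨he, h⟩
    · exact .inl <| .inl <| .inl <| .inr ⟨he, h⟩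
    · exact .inl <| .inl <| .inr ⟨he, h⟩
    · exact .inl <| .inr ⟨he, h⟩
    · exact .inr ⟨he, h⟩
  have hfin : (A ∪ B ∪ C ∪ D ∪ E).Finite :=
    hs.subset (by rintro e ((((he | he) | he) | he) | he) <;> exact he.1)
  have h₁ := Set.ncard_le_ncard hcover hfin
  have h₂ := Set.ncard_union_le (A ∪ B ∪ C ∪ D) E
  have h₃ := Set.ncard_union_le (A ∪ B ∪ C) D
  have h₄ := Set.ncard_union_le (A ∪ B) C
  have h₅ := Set.ncard_union_le A B
  omega

namespace SimpleGraph

section General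

variable {W : Type*} {G H : SimpleGraph W}

theorem Walk.mem_of_adj_closed {S : Set W} (hS : ∀ ⦃y z⦄, y ∈ S → G.Adj y z → z ∈ S)
    {a b : W} (p : G.Walk a b) (ha : a ∈ S) : b ∈ S := by
  induction p with
  | nil => exact ha
  | cons h _ ih => exact ih (hS ha h)

theorem ConnectedComponent.supp_subset_of_adj_closed {S : Set W}
    (hS : ∀ ⦃y z⦄, y ∈ S → G.Adj y z → z ∈ S) {x : W} (hx : x ∈ S) :
    (G.connectedComponentMk x).supp ⊆ S := fun _ hy =>
  (ConnectedComponent.exact hy).some.reverse.mem_of_adj_closed hS hx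

theorem one_le_ncard_supp_connectedComponentMk [Finite W] (x : W) :
    1 ≤ (G.connectedComponentMk x).supp.ncard :=
  (Set.ncard_pos).2 ⟨x, rfl⟩

theorem Adj.two_le_ncard_supp [Finite W] {u v : W} (h : G.Adj u v) :
    2 ≤ (G.connectedComponentMk u).supp.ncard := by
  have hsub : {u, v} ⊆ (G.connectedComponentMk u).supp := by
    rintro y (rfl | rfl)
    · rfl
    · exact (ConnectedComponent.connectedComponentMk_eq_of_adj h).symm
  exact (Set.ncard_pair h.ne).symm.le.trans (Set.ncard_le_ncard hsub)

theorem Adj.supp_subset_pair {u v : W} (h : G.Adj u v)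
    (hu : ∀ y z, G.Adj u y → G.Adj u z → y = z) (hv : ∀ y z, G.Adj v y → G.Adj v z → y = z) :
    (G.connectedComponentMk u).supp ⊆ {u, v} := by
  refine ConnectedComponent.supp_subset_of_adj_closed ?_ (.inl rfl)
  rintro y z (rfl | rfl) hyz
  · exact .inr (hu z v hyz h)
  · exact .inl (hv z _ hyz h.symm)

variable {u v : W}

theorem ConnectedComponent.supp_sup_edge_subset (c : (H ⊔ edge u v).ConnectedComponent) :
    (∃ x, c.supp ⊆ (H.connectedComponentMk x).supp) ∨
      c.supp ⊆ (H.connectedComponentMk u).supp ∪ (H.connectedComponentMk v).supp := by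
  obtain ⟨x, rfl⟩ := c.exists_rep
  by_cases hx : H.connectedComponentMk x = H.connectedComponentMk u ∨
      H.connectedComponentMk x = H.connectedComponentMk v
  · right
    refine ConnectedComponent.supp_subset_of_adj_closed ?_ hx
    rintro y z hy (hyz | hyz)
    · exact hy.imp (fun hy => ConnectedComponent.mem_supp_of_adj_mem_supp _ hy hyz)
        (fun hy => ConnectedComponent.mem_supp_of_adj_mem_supp _ hy hyz)
    · rw [edge_adj] at hyz
      rcases hyz with ⟨⟨-, rfl⟩ | ⟨-, rfl⟩, -⟩
      exacts [.inr rfl, .inl rfl]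
  · left
    refine ⟨x, ConnectedComponent.supp_subset_of_adj_closed ?_ rfl⟩
    rintro y z hy (hyz | hyz)
    · exact ConnectedComponent.mem_supp_of_adj_mem_supp _ hy hyz
    · rw [edge_adj] at hyz
      rcases hyz with ⟨⟨rfl, -⟩ | ⟨rfl, -⟩, -⟩
      exacts [(hx (.inl hy.symm)).elim, (hx (.inr hy.symm)).elim]

theorem ncard_supp_sup_edge_le [Finite W] {n : ℕ}
    (hcomp : ∀ c : H.ConnectedComponent, c.supp.ncard ≤ n)
    (h : H.connectedComponentMk u = H.connectedComponentMk v ∨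
      (H.connectedComponentMk u).supp.ncard + (H.connectedComponentMk v).supp.ncard ≤ n)
    (c : (H ⊔ edge u v).ConnectedComponent) : c.supp.ncard ≤ n := by
  rcases c.supp_sup_edge_subset with ⟨x, hx⟩ | huv
  · exact (Set.ncard_le_ncard hx).trans (hcomp _)
  · refine (Set.ncard_le_ncard huv).trans ?_
    rcases h with h | h
    · rw [h, Set.union_self]
      exact hcomp _
    · exact (Set.ncard_union_le _ _).trans h

end General

end SimpleGraph

section Categories

variable {W : Type*}

def InSomeCategory (H : SimpleGraph W) (e : Sym2 W) : Prop :=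
  CatDN H e ∨ CatDD H e ∨ CatSS H e ∨ CatDS H e ∨ CatDM H e

variable {H : SimpleGraph W} {u v : W}

theorem inSomeCategory_comm : InSomeCategory H s(u, v) ↔ InSomeCategory H s(v, u) := by
  rw [Sym2.eq_swap]

theorem inSomeCategory_of_adj [Finite W] (hcomp : ∀ c : H.ConnectedComponent, c.supp.ncard ≤ 3)
    (h : H.Adj u v) : InSomeCategory H s(u, v) := by
  have hcc : H.connectedComponentMk u = H.connectedComponentMk v :=
    ConnectedComponent.connectedComponentMk_eq_of_adj h
  have h₂ := h.two_le_ncard_supp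
  have h₃ := hcomp (H.connectedComponentMk u)
  obtain hsize | hsize : (H.connectedComponentMk u).supp.ncard = 2 ∨
      (H.connectedComponentMk u).supp.ncard = 3 := by omega
  · exact .inr <| .inr <| .inl ⟨u, v, rfl, hsize, by rwa [InIsoEdge, ← hcc]⟩
  by_cases hu : IsConnVert H u
  swap
  · exact .inr <| .inr <| .inr <| .inr <| .inl ⟨u, v, rfl, hsize, hu⟩
  by_cases hv : IsConnVert H v
  swap
  · exact .inr <| .inr <| .inr <| .inr <| .inl ⟨v, u, Sym2.eq_swap, hcc ▸ hsize, hv⟩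
  by_cases htri : IsTriangleComp H (H.connectedComponentMk u)
  · exact .inr <| .inr <| .inr <| .inr <| .inr ⟨u, v, rfl, hcc, htri⟩
  -- both ends of a length-2 path cannot be adjacent: they would form a component of size 2
  exfalso
  have hpair := h.supp_subset_pair (hu.2.resolve_right htri) (hv.2.resolve_right (hcc ▸ htri))
  have := (Set.ncard_le_ncard hpair).trans (Set.ncard_pair h.ne).le
  omega

theorem inSomeCategory_of_ne_of_le [Finite W]
    (hcomp : ∀ c : H.ConnectedComponent, c.supp.ncard ≤ 3)
    (hne : H.connectedComponentMk u ≠ H.connectedComponentMk v)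
    (hsum : 3 < (H.connectedComponentMk u).supp.ncard + (H.connectedComponentMk v).supp.ncard)
    (hle : (H.connectedComponentMk v).supp.ncard ≤ (H.connectedComponentMk u).supp.ncard) :
    InSomeCategory H s(u, v) := by
  have hu₃ := hcomp (H.connectedComponentMk u)
  have hv₃ := hcomp (H.connectedComponentMk v)
  have hv₁ := one_le_ncard_supp_connectedComponentMk (G := H) v
  obtain ⟨hu, hv⟩ | hu : ((H.connectedComponentMk u).supp.ncard = 2 ∧
      (H.connectedComponentMk v).supp.ncard = 2) ∨
      (H.connectedComponentMk u).supp.ncard = 3 := by omega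
  · exact .inr <| .inr <| .inl ⟨u, v, rfl, hu, hv⟩
  by_cases hcu : IsConnVert H u
  swap
  · exact .inr <| .inr <| .inr <| .inr <| .inl ⟨u, v, rfl, hu, hcu⟩
  obtain hv | hv | hv : (H.connectedComponentMk v).supp.ncard = 1 ∨
      (H.connectedComponentMk v).supp.ncard = 2 ∨
      (H.connectedComponentMk v).supp.ncard = 3 := by omega
  · exact .inl ⟨u, v, rfl, hcu, hv⟩
  · exact .inr <| .inr <| .inr <| .inl ⟨v, u, Sym2.eq_swap, hv, hcu⟩
  by_cases hcv : IsConnVert H v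
  · exact .inr <| .inl ⟨u, v, rfl, hcu, hcv, hne⟩
  · exact .inr <| .inr <| .inr <| .inr <| .inl ⟨v, u, Sym2.eq_swap, hv, hcv⟩

theorem inSomeCategory_of_ne [Finite W] (hcomp : ∀ c : H.ConnectedComponent, c.supp.ncard ≤ 3)
    (hne : H.connectedComponentMk u ≠ H.connectedComponentMk v)
    (hsum : 3 < (H.connectedComponentMk u).supp.ncard + (H.connectedComponentMk v).supp.ncard) :
    InSomeCategory H s(u, v) := by
  rcases le_total (H.connectedComponentMk v).supp.ncard (H.connectedComponentMk u).supp.ncard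
    with hle | hle
  · exact inSomeCategory_of_ne_of_le hcomp hne hsum hle
  · exact inSomeCategory_comm.2 <| inSomeCategory_of_ne_of_le hcomp (Ne.symm hne) (by omega) hle

theorem adj_or_ne_of_maximal [Finite W] {G : SimpleGraph W}
    (hcomp : ∀ c : H.ConnectedComponent, c.supp.ncard ≤ 3)
    (hmax : ∀ u v : W, G.Adj u v → ¬ H.Adj u v →
      ∃ c : (H ⊔ edge u v).ConnectedComponent, 3 < c.supp.ncard)
    (h : G.Adj u v) :
    H.Adj u v ∨ H.connectedComponentMk u ≠ H.connectedComponentMk v ∧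
      3 < (H.connectedComponentMk u).supp.ncard + (H.connectedComponentMk v).supp.ncard := by
  by_cases hH : H.Adj u v
  · exact .inl hH
  obtain ⟨c, hc⟩ := hmax u v h hH
  refine .inr (by_contra fun hbig => hc.not_ge (ncard_supp_sup_edge_le hcomp ?_ c))
  by_cases heq : H.connectedComponentMk u = H.connectedComponentMk v
  exacts [.inl heq, .inr (not_lt.1 fun hlt => hbig ⟨heq, hlt⟩)]

theorem inSomeCategory_of_maximal [Finite W] {G : SimpleGraph W}
    (hcomp : ∀ c : H.ConnectedComponent, c.supp.ncard ≤ 3)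
    (hmax : ∀ u v : W, G.Adj u v → ¬ H.Adj u v →
      ∃ c : (H ⊔ edge u v).ConnectedComponent, 3 < c.supp.ncard)
    (h : G.Adj u v) : InSomeCategory H s(u, v) :=
  (adj_or_ne_of_maximal hcomp hmax h).elim (inSomeCategory_of_adj hcomp)
    fun ⟨hne, hsum⟩ => inSomeCategory_of_ne hcomp hne hsum

end Categories

theorem five_categories_cover_general (G H : SimpleGraph V)
    (hcomp : ∀ c : H.ConnectedComponent, c.supp.ncard ≤ 3)
    (hmax : ∀ u v : V, G.Adj u v → ¬ H.Adj u v →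
      ∃ c : (H ⊔ SimpleGraph.fromEdgeSet {s(u, v)}).ConnectedComponent,
        3 < c.supp.ncard)
    (Mstar : Finset (Sym2 V)) (hMstar : IsMatching G Mstar) :
    Mstar.card ≤
      {e ∈ (Mstar : Set (Sym2 V)) | CatDN H e}.ncard +
      {e ∈ (Mstar : Set (Sym2 V)) | CatDD H e}.ncard +
      {e ∈ (Mstar : Set (Sym2 V)) | CatSS H e}.ncard +
      {e ∈ (Mstar : Set (Sym2 V)) | CatDS H e}.ncard +
      {e ∈ (Mstar : Set (Sym2 V)) | CatDM H e}.ncard := by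
  rw [← Set.ncard_coe_finset]
  refine Set.ncard_le_sum_ncard_sep_of_forall_or Mstar.finite_toSet fun e he => ?_
  induction e using Sym2.ind with
  | h u v => exact inSomeCategory_of_maximal hcomp hmax (hMstar.1 _ he)

/-- Every edge of the maximum matching `M*` falls into one of the five categories,
hence `D-to-N + D-to-D + S-S + D-S + D-mid ≥ |M*|`. -/
theorem five_categories_cover (G H : SimpleGraph V) (hle : H ≤ G)
    (hcomp : ∀ c : H.ConnectedComponent, c.supp.ncard ≤ 3)
    (hmax : ∀ u v : V, G.Adj u v → ¬ H.Adj u v →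
      ∃ c : (H ⊔ SimpleGraph.fromEdgeSet {s(u, v)}).ConnectedComponent,
        3 < c.supp.ncard)
    (Mstar : Finset (Sym2 V)) (hMstar : IsMatching G Mstar)
    (hMstarMax : ∀ N : Finset (Sym2 V), IsMatching G N → N.card ≤ Mstar.card) :
    Mstar.card ≤
      {e ∈ (Mstar : Set (Sym2 V)) | CatDN H e}.ncard +
      {e ∈ (Mstar : Set (Sym2 V)) | CatDD H e}.ncard +
      {e ∈ (Mstar : Set (Sym2 V)) | CatSS H e}.ncard +
      {e ∈ (Mstar : Set (Sym2 V)) | CatDS H e}.ncard +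
      {e ∈ (Mstar : Set (Sym2 V)) | CatDM H e}.ncard :=
  five_categories_cover_general G H hcomp hmax Mstar hMstar
end

section
/- Suppose a graph H on vertex set V is formed from a graph (V,P), whose components are isolated vertices, isolated edges (s of them), length-2 paths (d of them), and triangles (t of them), by adding a set A of edges such that: each edge of A connects a connection vertex of a path/triangle component either to an isolated vertex of (V,P) or to a connection vertex of a different path/triangle component, and every component of (V,P) meets at most one edge of A. Then H contains a matching of size at least s + d + t + |A|. -/
variable {V : Type*} [Fintype V] [DecidableEq V]

private lemma exists_adj_of_reachable_ne {H : SimpleGraph V} {a b : V}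
    (h : H.Reachable a b) (hab : a ≠ b) : ∃ w, H.Adj a w := by
  obtain ⟨p⟩ := h
  cases p with
  | nil => exact absurd rfl hab
  | cons h _ => exact ⟨_, h⟩

private lemma adj_mem_supp {H : SimpleGraph V} {c : H.ConnectedComponent} {a w : V}
    (ha : a ∈ c.supp) (hw : H.Adj a w) : w ∈ c.supp := by
  rw [SimpleGraph.ConnectedComponent.mem_supp_iff] at ha ⊢
  rw [← ha]
  exact (SimpleGraph.ConnectedComponent.eq).mpr hw.reachable.symm

private lemma reachable_of_mem_supp {H : SimpleGraph V} {c : H.ConnectedComponent} {a b : V}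
    (ha : a ∈ c.supp) (hb : b ∈ c.supp) : H.Reachable a b := by
  rw [SimpleGraph.ConnectedComponent.mem_supp_iff] at ha hb
  exact (SimpleGraph.ConnectedComponent.eq).mp (ha.trans hb.symm)

private lemma good_edge (H : SimpleGraph V) (c : H.ConnectedComponent)
    (h2 : 2 ≤ c.supp.ncard) (F : Set V)
    (hFsub : F ⊆ c.supp) (hFsing : F.Subsingleton)
    (hFconn : ∀ x ∈ F, IsConnVert H x) :
    ∃ a b, H.Adj a b ∧ a ∈ c.supp ∧ b ∈ c.supp ∧ a ∉ F ∧ b ∉ F := by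
  rcases F.eq_empty_or_nonempty with hF | ⟨x, hx⟩
  · obtain ⟨a, ha, b, hb, hab⟩ := (Set.one_lt_ncard (c.supp.toFinite)).mp (by omega)
    obtain ⟨w, hw⟩ := exists_adj_of_reachable_ne (reachable_of_mem_supp ha hb) hab
    exact ⟨a, w, hw, ha, adj_mem_supp ha hw, by simp [hF], by simp [hF]⟩
  · have hxc := hFconn x hx
    have hxs : x ∈ c.supp := hFsub hx
    have hcx : H.connectedComponentMk x = c :=
      (SimpleGraph.ConnectedComponent.mem_supp_iff _ _).mp hxs
    have h3 : c.supp.ncard = 3 := by rw [← hcx]; exact hxc.1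
    have hdiff : (c.supp \ {x}).ncard = 2 := by
      rw [Set.ncard_diff_singleton_of_mem hxs]
      omega
    obtain ⟨y, z, hyz, hset⟩ := Set.ncard_eq_two.mp hdiff
    have hy : y ∈ c.supp ∧ y ≠ x := by
      have h : y ∈ c.supp \ {x} := by rw [hset]; simp
      exact ⟨h.1, by simpa using h.2⟩
    have hz : z ∈ c.supp ∧ z ≠ x := by
      have h : z ∈ c.supp \ {x} := by rw [hset]; simp
      exact ⟨h.1, by simpa using h.2⟩
    have hmem3 : ∀ w ∈ c.supp, w = x ∨ w = y ∨ w = z := by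
      intro w hws
      by_cases hwx : w = x
      · exact Or.inl hwx
      · have h : w ∈ c.supp \ {x} := ⟨hws, by simpa using hwx⟩
        rw [hset] at h
        simpa using Or.inr h
    have hadj : H.Adj y z := by
      rcases hxc.2 with hdeg | htri
      · obtain ⟨w, hw⟩ :=
          exists_adj_of_reachable_ne (reachable_of_mem_supp hy.1 hz.1) hyz
        rcases hmem3 w (adj_mem_supp hy.1 hw) with hwx | hwy | hwz
        · rw [hwx] at hw
          obtain ⟨w', hw'⟩ :=
            exists_adj_of_reachable_ne (reachable_of_mem_supp hz.1 hy.1) hyz.symm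
          rcases hmem3 w' (adj_mem_supp hz.1 hw') with hwx' | hwy' | hwz'
          · rw [hwx'] at hw'
            exact absurd (hdeg y z hw.symm hw'.symm) hyz
          · rw [hwy'] at hw'
            exact hw'.symm
          · rw [hwz'] at hw'
            exact (H.loopless.irrefl z hw').elim
        · rw [hwy] at hw
          exact (H.loopless.irrefl y hw).elim
        · rw [hwz] at hw
          exact hw
      · have h2' := htri.2
        rw [hcx] at h2'
        exact h2' y hy.1 z hz.1 hyz
    exact ⟨y, z, hadj, hy.1, hz.1,
      fun h => hy.2 (hFsing h hx), fun h => hz.2 (hFsing h hx)⟩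

/-- If `H` (the graph `(V,P)`, all of whose components have at most 3 vertices, with `s`
isolated-edge, `d` length-2-path and `t` triangle components) is augmented by a set `A`
of edges, each joining a connection vertex to an isolated vertex or to a connection
vertex of a different component, where every component of `(V,P)` meets at most one edge
of `A`, then the resulting graph contains a matching of size at least `s + d + t + |A|`. -/
theorem augmented_graph_large_matching (H : SimpleGraph V)
    (hcomp : ∀ c : H.ConnectedComponent, c.supp.ncard ≤ 3)
    (s d t : ℕ)
    (hs : s = {c : H.ConnectedComponent | c.supp.ncard = 2}.ncard)
    (hd : d = {c : H.ConnectedComponent | IsPath2Comp H c}.ncard)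
    (ht : t = {c : H.ConnectedComponent | IsTriangleComp H c}.ncard)
    (A : Finset (Sym2 V))
    (hA : ∀ e ∈ A, ∃ u v : V, e = s(u, v) ∧ IsConnVert H u ∧
      (IsIsoVert H v ∨ (IsConnVert H v ∧
        H.connectedComponentMk u ≠ H.connectedComponentMk v)))
    (hAonce : ∀ e ∈ A, ∀ f ∈ A, ∀ x y : V, x ∈ e → y ∈ f →
      H.connectedComponentMk x = H.connectedComponentMk y → e = f) :
    ∃ M : Finset (Sym2 V),
      IsMatching (H ⊔ SimpleGraph.fromEdgeSet (A : Set (Sym2 V))) M ∧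
      s + d + t + A.card ≤ M.card := by
  classical
  have hfinC : Finite H.ConnectedComponent :=
    Finite.of_surjective H.connectedComponentMk fun c => c.exists_rep
  haveI := Fintype.ofFinite H.ConnectedComponent
  -- basic facts about edges of A
  have fact0 : ∀ e ∈ A, ∃ u v : V, e = s(u, v) ∧
      H.connectedComponentMk u ≠ H.connectedComponentMk v := by
    intro e he
    obtain ⟨u, v, heq, hu, hv⟩ := hA e he
    refine ⟨u, v, heq, ?_⟩
    rcases hv with hiso | ⟨_, hne⟩
    · intro hcontra
      have h1 := hu.1
      rw [hcontra] at h1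
      rw [IsIsoVert] at hiso
      omega
    · exact hne
  have fact1 : ∀ e ∈ A, ∀ x ∈ e, ∀ y ∈ e, x ≠ y →
      H.connectedComponentMk x ≠ H.connectedComponentMk y := by
    intro e he x hxe y hye hxy
    obtain ⟨u, v, heq, hne⟩ := fact0 e he
    subst heq
    rw [Sym2.mem_iff] at hxe hye
    rcases hxe with rfl | rfl <;> rcases hye with rfl | rfl
    · exact absurd rfl hxy
    · exact hne
    · exact fun h => hne h.symm
    · exact absurd rfl hxy
  have fact2 : ∀ e ∈ A, ∀ x ∈ e, 2 ≤ (H.connectedComponentMk x).supp.ncard →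
      IsConnVert H x := by
    intro e he x hxe hcard
    obtain ⟨u, v, heq, hu, hv⟩ := hA e he
    subst heq
    rw [Sym2.mem_iff] at hxe
    rcases hxe with rfl | rfl
    · exact hu
    · rcases hv with hiso | ⟨hconn, _⟩
      · rw [IsIsoVert] at hiso; omega
      · exact hconn
  -- the forbidden set of each component
  set F : H.ConnectedComponent → Set V :=
    fun c => {x | x ∈ c.supp ∧ ∃ e ∈ A, x ∈ e} with hF
  have hFsub : ∀ c, F c ⊆ c.supp := fun c x hx => hx.1
  have hFsing : ∀ c, (F c).Subsingleton := by
    intro c x hx y hy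
    obtain ⟨hxs, e, he, hxe⟩ := hx
    obtain ⟨hys, f, hf, hyf⟩ := hy
    have hcx := (SimpleGraph.ConnectedComponent.mem_supp_iff _ _).mp hxs
    have hcy := (SimpleGraph.ConnectedComponent.mem_supp_iff _ _).mp hys
    have hef : e = f := hAonce e he f hf x y hxe hyf (hcx.trans hcy.symm)
    subst hef
    by_contra hxy
    exact fact1 e he x hxe y hyf hxy (hcx.trans hcy.symm)
  have hFconn : ∀ c, 2 ≤ c.supp.ncard → ∀ x ∈ F c, IsConnVert H x := by
    intro c hc x hx
    obtain ⟨hxs, e, he, hxe⟩ := hx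
    have hcx := (SimpleGraph.ConnectedComponent.mem_supp_iff _ _).mp hxs
    exact fact2 e he x hxe (by rw [hcx]; exact hc)
  -- choose a good edge in each nontrivial component
  have key : ∀ c : {c : H.ConnectedComponent // 2 ≤ c.supp.ncard},
      ∃ a b : V, H.Adj a b ∧ a ∈ c.1.supp ∧ b ∈ c.1.supp ∧ a ∉ F c.1 ∧ b ∉ F c.1 :=
    fun c => good_edge H c.1 c.2 (F c.1) (hFsub c.1) (hFsing c.1) (hFconn c.1 c.2)
  choose a b hab hasupp hbsupp haF hbF using key
  set φ : {c : H.ConnectedComponent // 2 ≤ c.supp.ncard} → Sym2 V :=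
    fun c => s(a c, b c) with hφ
  -- avoidance: chosen edges avoid all vertices of A
  have havoid : ∀ c, ∀ e ∈ A, ∀ x ∈ φ c, x ∉ e := by
    intro c e he x hxφ hxe
    rw [hφ, Sym2.mem_iff] at hxφ
    rcases hxφ with rfl | rfl
    · exact haF c ⟨hasupp c, e, he, hxe⟩
    · exact hbF c ⟨hbsupp c, e, he, hxe⟩
  -- the matching
  refine ⟨A ∪ Finset.univ.image φ, ⟨?_, ?_⟩, ?_⟩
  · -- edges belong to the graph
    intro e he
    rw [Finset.mem_union] at he
    rw [SimpleGraph.edgeSet_sup]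
    rcases he with he | he
    · right
      rw [SimpleGraph.edgeSet_fromEdgeSet]
      refine ⟨he, ?_⟩
      obtain ⟨u, v, heq, hne⟩ := fact0 e he
      subst heq
      simp only [Sym2.mem_diagSet, Sym2.mk_isDiag_iff]
      exact fun h => hne (by rw [h])
    · left
      obtain ⟨c, _, rfl⟩ := Finset.mem_image.mp he
      exact (H.mem_edgeSet).mpr (hab c)
  · -- pairwise disjoint
    intro e he f hf hef v hve hvf
    rw [Finset.mem_union] at he hf
    rcases he with he | he <;> rcases hf with hf | hf
    · exact hef (hAonce e he f hf v v hve hvf rfl)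
    · obtain ⟨c, _, rfl⟩ := Finset.mem_image.mp hf
      exact havoid c e he v hvf hve
    · obtain ⟨c, _, rfl⟩ := Finset.mem_image.mp he
      exact havoid c f hf v hve hvf
    · obtain ⟨c, _, rfl⟩ := Finset.mem_image.mp he
      obtain ⟨c', _, rfl⟩ := Finset.mem_image.mp hf
      have hvc : v ∈ c.1.supp := by
        rw [hφ, Sym2.mem_iff] at hve
        rcases hve with rfl | rfl
        · exact hasupp c
        · exact hbsupp c
      have hvc' : v ∈ c'.1.supp := by
        rw [hφ, Sym2.mem_iff] at hvf
        rcases hvf with rfl | rfl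
        · exact hasupp c'
        · exact hbsupp c'
      have hcc : c = c' := by
        have h1 := (SimpleGraph.ConnectedComponent.mem_supp_iff _ _).mp hvc
        have h2 := (SimpleGraph.ConnectedComponent.mem_supp_iff _ _).mp hvc'
        exact Subtype.ext (h1.symm.trans h2)
      subst hcc
      exact hef rfl
  · -- cardinality
    have hdisj : Disjoint A (Finset.univ.image φ) := by
      rw [Finset.disjoint_right]
      intro e he hea
      obtain ⟨c, _, rfl⟩ := Finset.mem_image.mp he
      exact havoid c (φ c) hea (a c) (by rw [hφ]; simp) (by rw [hφ]; simp)
    have hinj : Set.InjOn φ ↑(Finset.univ : Finset {c : H.ConnectedComponent // 2 ≤ c.supp.ncard}) := by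
      intro c _ c' _ heq
      have hmem : a c ∈ φ c' := by rw [← heq, hφ]; simp
      have hacsupp : a c ∈ c'.1.supp := by
        rw [hφ, Sym2.mem_iff] at hmem
        rcases hmem with h | h
        · rw [h]; exact hasupp c'
        · rw [h]; exact hbsupp c'
      have h1 := (SimpleGraph.ConnectedComponent.mem_supp_iff _ _).mp (hasupp c)
      have h2 := (SimpleGraph.ConnectedComponent.mem_supp_iff _ _).mp hacsupp
      exact Subtype.ext (h1.symm.trans h2)
    rw [Finset.card_union_of_disjoint hdisj, Finset.card_image_of_injOn hinj]
    -- count components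
    have huniv : (Finset.univ : Finset {c : H.ConnectedComponent // 2 ≤ c.supp.ncard}).card
        = {c : H.ConnectedComponent | 2 ≤ c.supp.ncard}.ncard := by
      rw [Finset.card_univ, ← Nat.card_eq_fintype_card]
      exact Nat.card_coe_set_eq _
    have hUsplit : {c : H.ConnectedComponent | 2 ≤ c.supp.ncard} =
        {c | c.supp.ncard = 2} ∪
          ({c | IsPath2Comp H c} ∪ {c | IsTriangleComp H c}) := by
      ext c
      simp only [Set.mem_setOf_eq, Set.mem_union]
      constructor
      · intro h
        have h3 := hcomp c
        by_cases h2 : c.supp.ncard = 2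
        · exact Or.inl h2
        · have h3' : c.supp.ncard = 3 := by omega
          by_cases htri : IsTriangleComp H c
          · exact Or.inr (Or.inr htri)
          · exact Or.inr (Or.inl ⟨h3', htri⟩)
      · rintro (h | h | h)
        · omega
        · have := h.1; omega
        · have := h.1; omega
    have hd1 : Disjoint {c : H.ConnectedComponent | IsPath2Comp H c}
        {c | IsTriangleComp H c} := by
      rw [Set.disjoint_left]
      intro c hc hc'
      exact hc.2 hc'
    have hd2 : Disjoint {c : H.ConnectedComponent | c.supp.ncard = 2}
        ({c | IsPath2Comp H c} ∪ {c | IsTriangleComp H c}) := by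
      rw [Set.disjoint_left]
      intro c hc hc'
      simp only [Set.mem_setOf_eq] at hc
      rcases hc' with h | h
      · have := h.1; omega
      · have := h.1; omega
    have hScard : (Finset.univ : Finset {c : H.ConnectedComponent // 2 ≤ c.supp.ncard}).card
        = s + d + t := by
      rw [huniv, hUsplit, Set.ncard_union_eq hd2 (Set.toFinite _) (Set.toFinite _),
        Set.ncard_union_eq hd1 (Set.toFinite _) (Set.toFinite _), hs, hd, ht]
      omega
    omega
end
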